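/- Each of the 5 edges of the polygonal chain (0,2)-(0,0)-(2,0)-(2,2)-(1, 2−√3)-(1, 4−√3) in ℝ² has Euclidean length exactly 2, and the chain visits every point of {0,1,2}×{0,1,2}. -/

import Mathlib

noncomputable def pt2 (a b : ℝ) : EuclideanSpace ℝ (Fin 2) := WithLp.toLp 2 ![a, b]

/-- The vertices of the uncrossing covering path `P̌_{3,3}`. -/
noncomputable def Q33 : Fin 6 → EuclideanSpace ℝ (Fin 2) :=
  ![pt2 0 2, pt2 0 0, pt2 2 0, pt2 2 2, pt2 1 (2 - Real.sqrt 3), pt2 1 (4 - Real.sqrt 3)]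

lemma dist_pt2 (a b c d : ℝ) :
    dist (pt2 a b) (pt2 c d) = √((a - c) ^ 2 + (b - d) ^ 2) := by
  rw [EuclideanSpace.dist_eq, Fin.sum_univ_two]
  simp [pt2, Real.dist_eq, sq_abs]

lemma dist_pt2_eq_of_sq_add_sq_eq {a b c d r : ℝ} (hr : 0 ≤ r)
    (h : (a - c) ^ 2 + (b - d) ^ 2 = r ^ 2) : dist (pt2 a b) (pt2 c d) = r := by
  rw [dist_pt2, h, Real.sqrt_sq hr]

lemma pt2_mem_segment_of_mem_uIcc_snd {a b y₁ y₂ : ℝ} (hb : b ∈ Set.uIcc y₁ y₂) :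
    pt2 a b ∈ segment ℝ (pt2 a y₁) (pt2 a y₂) := by
  rw [← segment_eq_uIcc] at hb
  obtain ⟨s, t, hs, ht, hst, rfl⟩ := hb
  refine ⟨s, t, hs, ht, hst, ?_⟩
  ext i
  fin_cases i <;> simp [pt2, ← add_mul, hst]

lemma pt2_mem_segment_of_mem_uIcc_fst {a b x₁ x₂ : ℝ} (ha : a ∈ Set.uIcc x₁ x₂) :
    pt2 a b ∈ segment ℝ (pt2 x₁ b) (pt2 x₂ b) := by
  rw [← segment_eq_uIcc] at ha
  obtain ⟨s, t, hs, ht, hst, rfl⟩ := ha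
  refine ⟨s, t, hs, ht, hst, ?_⟩
  ext i
  fin_cases i <;> simp [pt2, ← add_mul, hst]

lemma one_le_sqrt_three_le_two : 1 ≤ √3 ∧ √3 ≤ 2 := by
  constructor
  · rw [Real.one_le_sqrt]; norm_num
  · rw [Real.sqrt_le_left (by norm_num)]; norm_num

/-- Each of the 5 edges of the chain `(0,2)-(0,0)-(2,0)-(2,2)-(1, 2−√3)-(1, 4−√3)` has
Euclidean length exactly `2`, and the chain visits every point of `{0,1,2} × {0,1,2}`. -/
theorem stmt9 :
    (∀ i : Fin 5, dist (Q33 i.castSucc) (Q33 i.succ) = 2) ∧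
    (∀ a b : ℝ, a ∈ ({0, 1, 2} : Set ℝ) → b ∈ ({0, 1, 2} : Set ℝ) →
      ∃ i : Fin 5, pt2 a b ∈ segment ℝ (Q33 i.castSucc) (Q33 i.succ)) := by
  obtain ⟨one_le_sqrt3, sqrt3_le_two⟩ := one_le_sqrt_three_le_two
  constructor
  · intro i
    fin_cases i <;> apply dist_pt2_eq_of_sq_add_sq_eq zero_le_two <;> norm_num
  · intro a b ha hb
    simp only [Set.mem_insert_iff, Set.mem_singleton_iff] at ha hb
    have hb02 : b ∈ Set.uIcc 0 2 := by
      rcases hb with rfl | rfl | rfl <;> norm_num [Set.mem_uIcc]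
    rcases ha with rfl | rfl | rfl
    · exact ⟨0, pt2_mem_segment_of_mem_uIcc_snd (by rwa [Set.uIcc_comm])⟩
    · rcases hb with rfl | hb12
      · exact ⟨1, pt2_mem_segment_of_mem_uIcc_fst (by norm_num [Set.mem_uIcc])⟩
      · refine ⟨4, pt2_mem_segment_of_mem_uIcc_snd ?_⟩
        rw [Set.uIcc_of_le (by linarith)]
        constructor <;> rcases hb12 with rfl | rfl <;> linarith
    · exact ⟨2, pt2_mem_segment_of_mem_uIcc_snd hb02⟩
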